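/- Let R, Θ be C² functions on (0,∞) × 𝕋, continuous on ℝ≥0 × 𝕋, with R surjective onto ℝ≥0 and R(0,·) constant, satisfying the hyperbolic system ∂_θR = α(r)∂_rR − β(r)R∂_rΘ, R∂_θΘ = α(r)R∂_rΘ + β(r)∂_rR (α, β continuous, β > 0) together with the constraint (∂_θR)² + (R∂_θΘ)² = h(r), where the associated f(r) = R∂_rR∂_θΘ − R∂_θR∂_rΘ never vanishes on (0,∞). Then R is radially symmetric: there exists 𝓡 : ℝ≥0 → ℝ≥0 such that R(r,θ) = 𝓡(r) for all (r,θ); moreover 𝓡(0) = 0 and 𝓡'(r) > 0 for all r > 0. -/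

import Mathlib

/-!
Solving the hyperbolic system for `∂_r R` gives `∂_r R = φ ∂_θ R + ψ v` with `v = R ∂_θ Θ`,
`φ = α / (α² + β²)` and `ψ = β / (α² + β²) > 0`; the constraint reads `(∂_θ R)² + v² = h`, and
`h > 0` because `f ≠ 0`. Along a characteristic `θ = c - Φ r` with `Φ' = φ` one finds
`d/dr R = ψ v` and `d/dr ∂_θ R = ψ ∂_θ v = -(ψ ∂²_θ R / v) ∂_θ R`. The latter is a linear ODE
wherever `v ≠ 0`, in particular near critical points of `R(r, ·)`, so a characteristic through one
critical point consists of critical points. On it `v = ±√h`, and the sign is `+`: otherwise `R`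
would strictly decrease along it, although `R ≥ 0` and `R → R(0, ·) = 0` as `r → 0`. Hence `R`
grows at the same rate `ψ √h` along the characteristics through a minimum and a maximum of
`R(r, ·)`, and since both start from `0` at `r = 0`, the minimum equals the maximum.
-/

open Real Set Filter Topology Function

section PartialDerivatives

variable {F Fr Fθ : ℝ → ℝ → ℝ} {U : Set (ℝ × ℝ)}

theorem fderiv_uncurry_apply_fst {x y a : ℝ} (hF : DifferentiableAt ℝ (uncurry F) (x, y))
    (ha : HasDerivAt (fun s => F s y) a x) : fderiv ℝ (uncurry F) (x, y) (1, 0) = a := by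
  have h := HasFDerivAt.comp_hasDerivAt x hF.hasFDerivAt
    ((hasDerivAt_id x).prodMk (hasDerivAt_const x y))
  exact h.unique ha

theorem fderiv_uncurry_apply_snd {x y b : ℝ} (hF : DifferentiableAt ℝ (uncurry F) (x, y))
    (hb : HasDerivAt (F x) b y) : fderiv ℝ (uncurry F) (x, y) (0, 1) = b := by
  have h := HasFDerivAt.comp_hasDerivAt y hF.hasFDerivAt
    ((hasDerivAt_const y x).prodMk (hasDerivAt_id y))
  exact h.unique hb

theorem differentiableAt_uncurry_snd {x y : ℝ} (hF : DifferentiableAt ℝ (uncurry F) (x, y)) :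
    DifferentiableAt ℝ (F x) y :=
  hF.comp y ((differentiableAt_const x).prodMk differentiableAt_id)

theorem hasDerivAt_comp_graph {γ : ℝ → ℝ} {x a b γ' : ℝ}
    (hF : DifferentiableAt ℝ (uncurry F) (x, γ x)) (ha : HasDerivAt (fun s => F s (γ x)) a x)
    (hb : HasDerivAt (F x) b (γ x)) (hγ : HasDerivAt γ γ' x) :
    HasDerivAt (fun s => F s (γ s)) (a + γ' * b) x := by
  have h := hF.hasFDerivAt.comp_hasDerivAt x ((hasDerivAt_id x).prodMk hγ)
  have hsplit : ((1 : ℝ), γ') = ((1 : ℝ), (0 : ℝ)) + γ' • ((0 : ℝ), (1 : ℝ)) := by simp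
  rwa [hsplit, map_add, map_smul, fderiv_uncurry_apply_fst hF ha,
    fderiv_uncurry_apply_snd hF hb, smul_eq_mul] at h

theorem contDiffOn_uncurry_of_hasDerivAt_fst {n : ℕ} (hU : IsOpen U)
    (hF : ContDiffOn ℝ (n + 1) (uncurry F) U)
    (hFr : ∀ p ∈ U, HasDerivAt (fun s => F s p.2) (Fr p.1 p.2) p.1) :
    ContDiffOn ℝ n (uncurry Fr) U :=
  ((hF.fderiv_of_isOpen hU le_rfl).clm_apply contDiffOn_const).congr fun p hp =>
    (fderiv_uncurry_apply_fst ((hF.differentiableOn (by simp)).differentiableAt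
      (hU.mem_nhds hp)) (hFr p hp)).symm

theorem contDiffOn_uncurry_of_hasDerivAt_snd {n : ℕ} (hU : IsOpen U)
    (hF : ContDiffOn ℝ (n + 1) (uncurry F) U)
    (hFθ : ∀ p ∈ U, HasDerivAt (F p.1) (Fθ p.1 p.2) p.2) :
    ContDiffOn ℝ n (uncurry Fθ) U :=
  ((hF.fderiv_of_isOpen hU le_rfl).clm_apply contDiffOn_const).congr fun p hp =>
    (fderiv_uncurry_apply_snd ((hF.differentiableOn (by simp)).differentiableAt
      (hU.mem_nhds hp)) (hFθ p hp)).symm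

theorem hasDerivAt_partial_comm (hU : IsOpen U) (hF : ContDiffOn ℝ 2 (uncurry F) U)
    (hFr : ∀ p ∈ U, HasDerivAt (fun s => F s p.2) (Fr p.1 p.2) p.1)
    (hFθ : ∀ p ∈ U, HasDerivAt (F p.1) (Fθ p.1 p.2) p.2) {x y a : ℝ} (hp : (x, y) ∈ U)
    (ha : HasDerivAt (Fr x) a y) : HasDerivAt (fun s => Fθ s y) a x := by
  have hFd : ∀ q ∈ U, DifferentiableAt ℝ (uncurry F) q := fun q hq =>
    (hF.differentiableOn (by simp)).differentiableAt (hU.mem_nhds hq)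
  have hD : HasFDerivAt (fderiv ℝ (uncurry F)) (fderiv ℝ (fderiv ℝ (uncurry F)) (x, y)) (x, y) :=
    (((hF.fderiv_of_isOpen hU (m := 1) le_rfl).differentiableOn one_ne_zero).differentiableAt
      (hU.mem_nhds hp)).hasFDerivAt
  have hθ : HasDerivAt (fun s => Fθ s y)
      (fderiv ℝ (fderiv ℝ (uncurry F)) (x, y) (1, 0) (0, 1)) x := by
    have h : HasDerivAt (fun s => fderiv ℝ (uncurry F) (s, y))
        (fderiv ℝ (fderiv ℝ (uncurry F)) (x, y) (1, 0)) x :=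
      HasFDerivAt.comp_hasDerivAt x hD ((hasDerivAt_id x).prodMk (hasDerivAt_const x y))
    refine ((ContinuousLinearMap.apply ℝ ℝ ((0 : ℝ), (1 : ℝ))).hasFDerivAt.comp_hasDerivAt x
      h).congr_of_eventuallyEq ?_
    filter_upwards [(continuous_id.prodMk continuous_const).continuousAt.preimage_mem_nhds
      (hU.mem_nhds hp)] with s hs
    exact (fderiv_uncurry_apply_snd (hFd _ hs) (hFθ _ hs)).symm
  have hr : HasDerivAt (Fr x) (fderiv ℝ (fderiv ℝ (uncurry F)) (x, y) (0, 1) (1, 0)) y := by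
    have h : HasDerivAt (fun t => fderiv ℝ (uncurry F) (x, t))
        (fderiv ℝ (fderiv ℝ (uncurry F)) (x, y) (0, 1)) y :=
      HasFDerivAt.comp_hasDerivAt y hD ((hasDerivAt_const y x).prodMk (hasDerivAt_id y))
    refine ((ContinuousLinearMap.apply ℝ ℝ ((1 : ℝ), (0 : ℝ))).hasFDerivAt.comp_hasDerivAt y
      h).congr_of_eventuallyEq ?_
    filter_upwards [(continuous_const.prodMk continuous_id).continuousAt.preimage_mem_nhds
      (hU.mem_nhds hp)] with t ht
    exact (fderiv_uncurry_apply_fst (hFd _ ht) (hFr _ ht)).symm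
  rwa [((hF.contDiffAt (hU.mem_nhds hp)).isSymmSndFDerivAt (by simp)).eq, hr.unique ha] at hθ

end PartialDerivatives

theorem eventuallyEq_zero_of_hasDerivAt_mul {k l : ℝ → ℝ} {a : ℝ} (hl : ContinuousAt l a)
    (hk : ∀ᶠ x in 𝓝 a, HasDerivAt k (l x * k x) x) (ha : k a = 0) : k =ᶠ[𝓝 a] 0 := by
  have hbound : ∀ᶠ x in 𝓝 a, ‖l x‖₊ ≤ ‖l a‖₊ + 1 :=
    hl.nnnorm.eventually (gt_mem_nhds (lt_add_one _)) |>.mono fun _ hx => hx.le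
  refine ODE_solution_unique_of_eventually (v := fun x y => l x * y) (s := fun _ => univ)
    (K := ‖l a‖₊ + 1) ?_ (hk.mono fun x hx => ⟨hx, mem_univ _⟩)
    (Eventually.of_forall fun x => ⟨by simp, mem_univ _⟩) ha
  filter_upwards [hbound] with x hx
  exact ((lipschitzWith_smul (l x)).weaken hx).lipschitzOnWith

theorem IsPreconnected.eqOn_of_forall_eventuallyEq {X Y : Type*} [TopologicalSpace X]
    [TopologicalSpace Y] [T1Space Y] {k : X → Y} {I : Set X} {c : Y} {a : X}
    (hI : IsPreconnected I) (hIo : IsOpen I) (hk : ContinuousOn k I)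
    (hloc : ∀ x ∈ I, k x = c → ∀ᶠ y in 𝓝 x, k y = c) (ha : a ∈ I) (hka : k a = c) :
    EqOn k (fun _ => c) I := by
  have hsub : I ⊆ {x | ∀ᶠ y in 𝓝 x, k y = c} := by
    refine hI.subset_of_closure_inter_subset isOpen_setOfPred_eventually_nhds
      ⟨a, ha, hloc a ha hka⟩ ?_
    rintro x ⟨hx, hxI⟩
    refine hloc x hxI ?_
    have := ((hk.continuousAt (hIo.mem_nhds hxI)).continuousWithinAt).mem_closure_image hx
    rw [← mem_singleton_iff, ← closure_singleton]
    exact closure_mono (image_subset_iff.2 fun y hy => hy.self_of_nhds) this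
  exact fun x hx => (hsub hx).self_of_nhds

theorem tendsto_uncurry_of_periodic {F : ℝ → ℝ → ℝ} {T y : ℝ} (hT : 0 < T)
    (hF : ContinuousOn (uncurry F) (Ici 0 ×ˢ univ)) (hper : ∀ r, Periodic (F r) T)
    (h0 : ∀ θ, F 0 θ = y) : Tendsto (uncurry F) (𝓝[≥] 0 ×ˢ ⊤) (𝓝 y) := by
  rw [Metric.tendsto_nhds]
  intro ε hε
  have hK : ∀ᶠ r in 𝓝 (0 : ℝ), ∀ θ ∈ Icc 0 T, (r, θ) ∈ Ici 0 ×ˢ univ → dist (F r θ) y < ε := by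
    refine isCompact_Icc.eventually_forall_of_forall_eventually fun θ _ => ?_
    have hc := (hF (0, θ) ⟨le_refl (0 : ℝ), mem_univ _⟩).eventually
      (Metric.ball_mem_nhds (uncurry F (0, θ)) hε)
    simp only [uncurry_apply_pair, h0] at hc
    exact eventually_nhdsWithin_iff.1 hc
  rw [prod_top, eventually_comap]
  filter_upwards [nhdsWithin_le_nhds hK, self_mem_nhdsWithin] with r hr hr0 p rfl
  obtain ⟨θ, hθ, hθeq⟩ := (hper p.1).exists_mem_Ico₀ hT p.2
  simpa [uncurry, hθeq] using hr θ (Ico_subset_Icc_self hθ) ⟨hr0, mem_univ _⟩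

theorem StrictAntiOn.lt_of_tendsto_nhdsGT {g : ℝ → ℝ} {a y r : ℝ} (hg : StrictAntiOn g (Ioi a))
    (hy : Tendsto g (𝓝[>] a) (𝓝 y)) (hr : a < r) : g r < y := by
  have hm : a < (a + r) / 2 := by linarith
  calc g r < g ((a + r) / 2) := hg hm hr (by linarith)
    _ ≤ y := ge_of_tendsto hy <| by
      filter_upwards [Ioo_mem_nhdsGT hm] with s hs using (hg hs.1 hm hs.2).le

theorem eqOn_of_hasDerivAt_zero_of_tendsto {g : ℝ → ℝ} {a y : ℝ}
    (hg : ∀ r > a, HasDerivAt g 0 r) (hy : Tendsto g (𝓝[>] a) (𝓝 y)) :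
    EqOn g (fun _ => y) (Ioi a) := by
  intro r hr
  have hconst : ∀ s ∈ Ioi a, g s = g r := fun s hs =>
    isOpen_Ioi.is_const_of_deriv_eq_zero isPreconnected_Ioi
      (fun x hx => (hg x hx).differentiableAt.differentiableWithinAt)
      (fun x hx => (hg x hx).deriv) hs hr
  have hev : g =ᶠ[𝓝[>] a] fun _ => g r := eventually_nhdsWithin_of_forall hconst
  exact tendsto_nhds_unique (tendsto_const_nhds.congr' hev.symm) hy

theorem exists_forall_hasDerivAt_of_continuousOn_Ioi {φ : ℝ → ℝ} {a : ℝ}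
    (hφ : ContinuousOn φ (Ioi a)) : ∃ Φ : ℝ → ℝ, ∀ r > a, HasDerivAt Φ (φ r) r :=
  ⟨fun r => ∫ s in (a + 1)..r, φ s, fun r hr =>
    intervalIntegral.integral_hasDerivAt_right
      ((hφ.mono fun _ ht => lt_of_lt_of_le (lt_min (lt_add_one a) hr) ht.1).intervalIntegrable)
      (hφ.stronglyMeasurableAtFilter isOpen_Ioi r hr) (hφ.continuousAt (isOpen_Ioi.mem_nhds hr))⟩

theorem ContinuousOn.comp_characteristic {G : ℝ → ℝ → ℝ} {Φ : ℝ → ℝ}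
    (hG : ContinuousOn (uncurry G) (Ioi 0 ×ˢ univ)) (hΦ : ContinuousOn Φ (Ioi 0)) (c : ℝ) :
    ContinuousOn (fun s => G s (c - Φ s)) (Ioi 0) :=
  hG.comp (continuousOn_id.prodMk (continuousOn_const.sub hΦ)) fun _ hs => ⟨hs, mem_univ _⟩

structure TransportSystem (R Rr Rθ v : ℝ → ℝ → ℝ) (φ ψ : ℝ → ℝ) : Prop where
  contDiffOn : ContDiffOn ℝ 2 (uncurry R) (Ioi 0 ×ˢ univ)
  hasDerivAt_fst : ∀ r > (0 : ℝ), ∀ θ, HasDerivAt (fun s => R s θ) (Rr r θ) r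
  hasDerivAt_snd : ∀ r > (0 : ℝ), ∀ θ, HasDerivAt (R r) (Rθ r θ) θ
  continuousOn_φ : ContinuousOn φ (Ioi 0)
  continuousOn_ψ : ContinuousOn ψ (Ioi 0)
  ψ_pos : ∀ r > (0 : ℝ), 0 < ψ r
  eq_add : ∀ r > (0 : ℝ), ∀ θ, Rr r θ = φ r * Rθ r θ + ψ r * v r θ

namespace TransportSystem

variable {R Rr Rθ v : ℝ → ℝ → ℝ} {φ ψ Φ h : ℝ → ℝ}

theorem contDiffOn_fst (hS : TransportSystem R Rr Rθ v φ ψ) :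
    ContDiffOn ℝ 1 (uncurry Rr) (Ioi 0 ×ˢ univ) :=
  contDiffOn_uncurry_of_hasDerivAt_fst (isOpen_Ioi.prod isOpen_univ) hS.contDiffOn
    fun p hp => hS.hasDerivAt_fst p.1 hp.1 p.2

theorem contDiffOn_snd (hS : TransportSystem R Rr Rθ v φ ψ) :
    ContDiffOn ℝ 1 (uncurry Rθ) (Ioi 0 ×ˢ univ) :=
  contDiffOn_uncurry_of_hasDerivAt_snd (isOpen_Ioi.prod isOpen_univ) hS.contDiffOn
    fun p hp => hS.hasDerivAt_snd p.1 hp.1 p.2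

theorem differentiableAt (hS : TransportSystem R Rr Rθ v φ ψ) {r : ℝ} (hr : 0 < r) (θ : ℝ) :
    DifferentiableAt ℝ (uncurry R) (r, θ) :=
  (hS.contDiffOn.differentiableOn (by simp)).differentiableAt
    ((isOpen_Ioi.prod isOpen_univ).mem_nhds ⟨hr, mem_univ θ⟩)

theorem differentiableAt_fst (hS : TransportSystem R Rr Rθ v φ ψ) {r : ℝ} (hr : 0 < r) (θ : ℝ) :
    DifferentiableAt ℝ (uncurry Rr) (r, θ) :=
  (hS.contDiffOn_fst.differentiableOn one_ne_zero).differentiableAt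
    ((isOpen_Ioi.prod isOpen_univ).mem_nhds ⟨hr, mem_univ θ⟩)

theorem differentiableAt_snd (hS : TransportSystem R Rr Rθ v φ ψ) {r : ℝ} (hr : 0 < r) (θ : ℝ) :
    DifferentiableAt ℝ (uncurry Rθ) (r, θ) :=
  (hS.contDiffOn_snd.differentiableOn one_ne_zero).differentiableAt
    ((isOpen_Ioi.prod isOpen_univ).mem_nhds ⟨hr, mem_univ θ⟩)

theorem hasDerivAt_deriv_snd (hS : TransportSystem R Rr Rθ v φ ψ) {r : ℝ} (hr : 0 < r) (θ : ℝ) :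
    HasDerivAt (Rθ r) (deriv (Rθ r) θ) θ :=
  (differentiableAt_uncurry_snd (hS.differentiableAt_snd hr θ)).hasDerivAt

theorem continuousOn_deriv_snd (hS : TransportSystem R Rr Rθ v φ ψ) :
    ContinuousOn (uncurry fun r θ => deriv (Rθ r) θ) (Ioi 0 ×ˢ univ) :=
  (contDiffOn_uncurry_of_hasDerivAt_snd (n := 0) (isOpen_Ioi.prod isOpen_univ)
    (by simpa using hS.contDiffOn_snd) fun p hp => hS.hasDerivAt_deriv_snd hp.1 p.2).continuousOn

theorem v_eq_div (hS : TransportSystem R Rr Rθ v φ ψ) {r : ℝ} (hr : 0 < r) :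
    v r = fun θ => (Rr r θ - φ r * Rθ r θ) / ψ r := by
  ext θ
  rw [eq_div_iff (hS.ψ_pos r hr).ne', hS.eq_add r hr θ]
  ring

theorem continuousOn_v (hS : TransportSystem R Rr Rθ v φ ψ) :
    ContinuousOn (uncurry v) (Ioi 0 ×ˢ univ) := by
  have hfst : MapsTo Prod.fst (Ioi (0 : ℝ) ×ˢ (univ : Set ℝ)) (Ioi 0) := fun _ hp => hp.1
  have hφ := hS.continuousOn_φ.comp continuousOn_fst hfst
  have hψ := hS.continuousOn_ψ.comp continuousOn_fst hfst
  refine ((hS.contDiffOn_fst.continuousOn.sub (hφ.mul hS.contDiffOn_snd.continuousOn)).div hψ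
    fun p hp => (hS.ψ_pos p.1 hp.1).ne').congr fun p hp => ?_
  rw [uncurry, hS.v_eq_div hp.1]
  rfl

theorem hasDerivAt_characteristic (hS : TransportSystem R Rr Rθ v φ ψ)
    (hΦ : ∀ r > 0, HasDerivAt Φ (φ r) r) (c : ℝ) {r : ℝ} (hr : 0 < r) :
    HasDerivAt (fun s => R s (c - Φ s)) (ψ r * v r (c - Φ r)) r := by
  convert hasDerivAt_comp_graph (hS.differentiableAt hr _) (hS.hasDerivAt_fst r hr _)
    (hS.hasDerivAt_snd r hr _) ((hΦ r hr).const_sub c) using 1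
  rw [hS.eq_add r hr]
  ring

theorem hasDerivAt_snd_characteristic (hS : TransportSystem R Rr Rθ v φ ψ)
    (hΦ : ∀ r > 0, HasDerivAt Φ (φ r) r) (c : ℝ) {r w : ℝ} (hr : 0 < r)
    (hw : HasDerivAt (v r) w (c - Φ r)) :
    HasDerivAt (fun s => Rθ s (c - Φ s)) (ψ r * w) r := by
  have hRr : HasDerivAt (Rr r) (φ r * deriv (Rθ r) (c - Φ r) + ψ r * w) (c - Φ r) := by
    rw [show Rr r = fun θ => φ r * Rθ r θ + ψ r * v r θ from funext (hS.eq_add r hr)]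
    exact ((hS.hasDerivAt_deriv_snd hr _).const_mul _).add (hw.const_mul _)
  have hRθr := hasDerivAt_partial_comm (isOpen_Ioi.prod isOpen_univ) hS.contDiffOn
    (fun p hp => hS.hasDerivAt_fst p.1 hp.1 p.2) (fun p hp => hS.hasDerivAt_snd p.1 hp.1 p.2)
    ⟨hr, mem_univ _⟩ hRr
  convert hasDerivAt_comp_graph (hS.differentiableAt_snd hr _) hRθr
    (hS.hasDerivAt_deriv_snd hr _) ((hΦ r hr).const_sub c) using 1
  ring

theorem v_ne_zero_of_snd_eq_zero (hcons : ∀ r > 0, ∀ θ, Rθ r θ ^ 2 + v r θ ^ 2 = h r)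
    (hh : ∀ r > 0, 0 < h r) {r θ : ℝ} (hr : 0 < r) (hθ : Rθ r θ = 0) : v r θ ≠ 0 := by
  intro hv
  have := hcons r hr θ
  rw [hθ, hv] at this
  linarith [hh r hr]

theorem hasDerivAt_snd_characteristic_eq_mul (hS : TransportSystem R Rr Rθ v φ ψ)
    (hΦ : ∀ r > 0, HasDerivAt Φ (φ r) r) (hcons : ∀ r > 0, ∀ θ, Rθ r θ ^ 2 + v r θ ^ 2 = h r)
    (c : ℝ) {r : ℝ} (hr : 0 < r) (hv : v r (c - Φ r) ≠ 0) :
    HasDerivAt (fun s => Rθ s (c - Φ s))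
      (-(ψ r * deriv (Rθ r) (c - Φ r) / v r (c - Φ r)) * Rθ r (c - Φ r)) r := by
  set θ := c - Φ r
  have hvθ : HasDerivAt (v r) (deriv (v r) θ) θ := by
    refine DifferentiableAt.hasDerivAt ?_
    rw [hS.v_eq_div hr]
    exact ((differentiableAt_uncurry_snd (hS.differentiableAt_fst hr θ)).sub
      ((differentiableAt_uncurry_snd (hS.differentiableAt_snd hr θ)).const_mul _)).div_const _
  have hsq : 2 * Rθ r θ * deriv (Rθ r) θ + 2 * v r θ * deriv (v r) θ = 0 := by
    have hd := ((hS.hasDerivAt_deriv_snd hr θ).pow 2).add (hvθ.pow 2)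
    rw [show Rθ r ^ 2 + v r ^ 2 = fun _ => h r from funext (hcons r hr)] at hd
    simpa using hd.unique (hasDerivAt_const θ (h r))
  convert hS.hasDerivAt_snd_characteristic hΦ c hr hvθ using 1
  field_simp
  linear_combination (-ψ r / 2) * hsq

theorem snd_eq_zero_along_characteristic (hS : TransportSystem R Rr Rθ v φ ψ)
    (hΦ : ∀ r > 0, HasDerivAt Φ (φ r) r) (hcons : ∀ r > 0, ∀ θ, Rθ r θ ^ 2 + v r θ ^ 2 = h r)
    (hh : ∀ r > 0, 0 < h r) {c r₀ r : ℝ} (hr₀ : 0 < r₀) (h₀ : Rθ r₀ (c - Φ r₀) = 0)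
    (hr : 0 < r) : Rθ r (c - Φ r) = 0 := by
  have hΦc : ContinuousOn Φ (Ioi 0) := fun s hs => (hΦ s hs).continuousAt.continuousWithinAt
  have hv := hS.continuousOn_v.comp_characteristic hΦc c
  have huθ := hS.continuousOn_deriv_snd.comp_characteristic hΦc c
  refine isPreconnected_Ioi.eqOn_of_forall_eventuallyEq isOpen_Ioi
    (hS.contDiffOn_snd.continuousOn.comp_characteristic hΦc c) (fun x hx hx0 => ?_) hr₀ h₀ hr
  have hvx := v_ne_zero_of_snd_eq_zero hcons hh hx hx0
  have hxU : Ioi (0 : ℝ) ∈ 𝓝 x := isOpen_Ioi.mem_nhds hx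
  have hl : ContinuousAt (fun s => -(ψ s * deriv (Rθ s) (c - Φ s) / v s (c - Φ s))) x :=
    (((hS.continuousOn_ψ.continuousAt hxU).mul (huθ.continuousAt hxU)).div
      (hv.continuousAt hxU) hvx).neg
  refine eventuallyEq_zero_of_hasDerivAt_mul hl ?_ hx0
  filter_upwards [hxU, (hv.continuousAt hxU).eventually_ne hvx] with s hs hvs
  exact hS.hasDerivAt_snd_characteristic_eq_mul hΦ hcons c hs hvs

theorem v_pos_of_snd_eq_zero (hS : TransportSystem R Rr Rθ v φ ψ)
    (hcons : ∀ r > 0, ∀ θ, Rθ r θ ^ 2 + v r θ ^ 2 = h r) (hh : ∀ r > 0, 0 < h r)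
    (hRnn : ∀ r > 0, ∀ θ, 0 ≤ R r θ) (hlim : Tendsto (uncurry R) (𝓝[>] 0 ×ˢ ⊤) (𝓝 0))
    {r θ : ℝ} (hr : 0 < r) (hθ : Rθ r θ = 0) : 0 < v r θ := by
  obtain ⟨Φ, hΦ⟩ := exists_forall_hasDerivAt_of_continuousOn_Ioi hS.continuousOn_φ
  have hΦc : ContinuousOn Φ (Ioi 0) := fun s hs => (hΦ s hs).continuousAt.continuousWithinAt
  obtain ⟨c, rfl⟩ : ∃ c, c - Φ r = θ := ⟨θ + Φ r, by ring⟩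
  have hne : ∀ s > 0, v s (c - Φ s) ≠ 0 := fun s hs => v_ne_zero_of_snd_eq_zero hcons hh hs
    (hS.snd_eq_zero_along_characteristic hΦ hcons hh hr hθ hs)
  by_contra! hnonpos
  have hneg : ∀ s > 0, v s (c - Φ s) < 0 := fun s hs => by
    by_contra! hpos
    obtain ⟨x, hx, hx0⟩ := isPreconnected_Ioi.intermediate_value hr hs
      (hS.continuousOn_v.comp_characteristic hΦc c) ⟨hnonpos, hpos⟩
    exact hne x hx hx0
  have hanti : StrictAntiOn (fun s => R s (c - Φ s)) (Ioi 0) := by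
    refine strictAntiOn_of_hasDerivWithinAt_neg (f' := fun s => ψ s * v s (c - Φ s))
      (convex_Ioi 0)
      (fun s hs => (hS.hasDerivAt_characteristic hΦ c hs).continuousAt.continuousWithinAt)
      ?_ ?_ <;> rw [interior_Ioi]
    · exact fun s hs => (hS.hasDerivAt_characteristic hΦ c hs).hasDerivWithinAt
    · exact fun s hs => mul_neg_of_pos_of_neg (hS.ψ_pos s hs) (hneg s hs)
  have := hanti.lt_of_tendsto_nhdsGT (hlim.comp (tendsto_id.prodMk tendsto_top)) hr
  linarith [hRnn r hr (c - Φ r)]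

theorem eq_of_snd_eq_zero (hS : TransportSystem R Rr Rθ v φ ψ)
    (hcons : ∀ r > 0, ∀ θ, Rθ r θ ^ 2 + v r θ ^ 2 = h r) (hh : ∀ r > 0, 0 < h r)
    (hRnn : ∀ r > 0, ∀ θ, 0 ≤ R r θ) (hlim : Tendsto (uncurry R) (𝓝[>] 0 ×ˢ ⊤) (𝓝 0))
    {r θ₁ θ₂ : ℝ} (hr : 0 < r) (h₁ : Rθ r θ₁ = 0) (h₂ : Rθ r θ₂ = 0) : R r θ₁ = R r θ₂ := by
  obtain ⟨Φ, hΦ⟩ := exists_forall_hasDerivAt_of_continuousOn_Ioi hS.continuousOn_φ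
  obtain ⟨c₁, rfl⟩ : ∃ c, c - Φ r = θ₁ := ⟨θ₁ + Φ r, by ring⟩
  obtain ⟨c₂, rfl⟩ : ∃ c, c - Φ r = θ₂ := ⟨θ₂ + Φ r, by ring⟩
  have hv : ∀ s > 0, v s (c₁ - Φ s) = v s (c₂ - Φ s) := fun s hs => by
    have k₁ := hS.snd_eq_zero_along_characteristic hΦ hcons hh hr h₁ hs
    have k₂ := hS.snd_eq_zero_along_characteristic hΦ hcons hh hr h₂ hs
    have hsq := hcons s hs (c₁ - Φ s)
    rw [← hcons s hs (c₂ - Φ s), k₁, k₂] at hsq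
    exact (sq_eq_sq₀ (hS.v_pos_of_snd_eq_zero hcons hh hRnn hlim hs k₁).le
      (hS.v_pos_of_snd_eq_zero hcons hh hRnn hlim hs k₂).le).1 (by linarith)
  have hdiff : ∀ s > 0, HasDerivAt (fun s => R s (c₁ - Φ s) - R s (c₂ - Φ s)) 0 s :=
    fun s hs => by
    have := (hS.hasDerivAt_characteristic hΦ c₁ hs).sub (hS.hasDerivAt_characteristic hΦ c₂ hs)
    rwa [hv s hs, sub_self] at this
  have hlim : Tendsto (fun s => R s (c₁ - Φ s) - R s (c₂ - Φ s)) (𝓝[>] 0) (𝓝 0) := by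
    simpa using (hlim.comp (tendsto_id.prodMk tendsto_top)).sub
      (hlim.comp (tendsto_id.prodMk tendsto_top))
  exact sub_eq_zero.1 (eqOn_of_hasDerivAt_zero_of_tendsto hdiff hlim hr)

theorem eq_of_periodic (hS : TransportSystem R Rr Rθ v φ ψ)
    (hcons : ∀ r > 0, ∀ θ, Rθ r θ ^ 2 + v r θ ^ 2 = h r) (hh : ∀ r > 0, 0 < h r)
    (hRnn : ∀ r > 0, ∀ θ, 0 ≤ R r θ) (hlim : Tendsto (uncurry R) (𝓝[>] 0 ×ˢ ⊤) (𝓝 0))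
    {T : ℝ} (hT : T ≠ 0) (hper : ∀ r, Periodic (R r) T) {r : ℝ} (hr : 0 < r) (θ θ' : ℝ) :
    R r θ = R r θ' := by
  have hK := (hper r).compact_of_continuous hT
    (continuous_iff_continuousAt.2 fun t => (hS.hasDerivAt_snd r hr t).continuousAt)
  obtain ⟨_, ⟨θm, rfl⟩, hmin⟩ := hK.exists_isLeast (range_nonempty _)
  obtain ⟨_, ⟨θM, rfl⟩, hmax⟩ := hK.exists_isGreatest (range_nonempty _)
  have hm : IsLocalMin (R r) θm := Eventually.of_forall fun t => hmin ⟨t, rfl⟩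
  have hM : IsLocalMax (R r) θM := Eventually.of_forall fun t => hmax ⟨t, rfl⟩
  have hmM := hS.eq_of_snd_eq_zero hcons hh hRnn hlim hr
    (hm.hasDerivAt_eq_zero (hS.hasDerivAt_snd r hr θm))
    (hM.hasDerivAt_eq_zero (hS.hasDerivAt_snd r hr θM))
  have hbounds : ∀ t, R r θm ≤ R r t ∧ R r t ≤ R r θm := fun t =>
    ⟨hmin ⟨t, rfl⟩, hmM ▸ hmax ⟨t, rfl⟩⟩
  linarith [hbounds θ, hbounds θ']

theorem eq_zero_at_zero (hS : TransportSystem R Rr Rθ v φ ψ)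
    (hcons : ∀ r > 0, ∀ θ, Rθ r θ ^ 2 + v r θ ^ 2 = h r) (hh : ∀ r > 0, 0 < h r)
    (hRnn : ∀ r > 0, ∀ θ, 0 ≤ R r θ) (hzero : ∃ r θ, 0 ≤ r ∧ R r θ = 0)
    (hconst : ∀ θ θ', R 0 θ = R 0 θ') (θ : ℝ) : R 0 θ = 0 := by
  obtain ⟨r, θ₀, hr, h₀⟩ := hzero
  rcases hr.eq_or_lt with rfl | hr
  · rw [hconst θ θ₀, h₀]
  have hθ : Rθ r θ₀ = 0 := IsLocalMin.hasDerivAt_eq_zero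
    (Eventually.of_forall fun t => h₀ ▸ hRnn r hr t) (hS.hasDerivAt_snd r hr θ₀)
  have hr' : Rr r θ₀ = 0 := IsLocalMin.hasDerivAt_eq_zero
    (mem_of_superset (Ioi_mem_nhds hr) fun s hs => h₀ ▸ hRnn s hs θ₀)
    (hS.hasDerivAt_fst r hr θ₀)
  have := hS.eq_add r hr θ₀
  rw [hθ, hr', mul_zero, zero_add, eq_comm, mul_eq_zero] at this
  exact (not_or.2 ⟨(hS.ψ_pos r hr).ne', v_ne_zero_of_snd_eq_zero hcons hh hr hθ⟩ this).elim

theorem of_hyperbolic {Θr Θθ : ℝ → ℝ → ℝ} {α β : ℝ → ℝ}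
    (hR : ContDiffOn ℝ 2 (uncurry R) (Ioi 0 ×ˢ univ))
    (hRr : ∀ r > (0 : ℝ), ∀ θ, HasDerivAt (fun s => R s θ) (Rr r θ) r)
    (hRθ : ∀ r > (0 : ℝ), ∀ θ, HasDerivAt (fun t => R r t) (Rθ r θ) θ)
    (hα : ContinuousOn α (Ioi 0)) (hβ : ContinuousOn β (Ioi 0)) (hβpos : ∀ r > (0 : ℝ), 0 < β r)
    (hyp1 : ∀ r > (0 : ℝ), ∀ θ, Rθ r θ = α r * Rr r θ - β r * R r θ * Θr r θ)
    (hyp2 : ∀ r > (0 : ℝ), ∀ θ, R r θ * Θθ r θ = α r * R r θ * Θr r θ + β r * Rr r θ) :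
    TransportSystem R Rr Rθ (fun r θ => R r θ * Θθ r θ)
      (fun r => α r / (α r ^ 2 + β r ^ 2)) (fun r => β r / (α r ^ 2 + β r ^ 2)) := by
  have hden : ∀ r > (0 : ℝ), 0 < α r ^ 2 + β r ^ 2 := fun r hr => by
    have := hβpos r hr
    positivity
  have hdenc : ContinuousOn (fun r => α r ^ 2 + β r ^ 2) (Ioi 0) := (hα.pow 2).add (hβ.pow 2)
  refine ⟨hR, hRr, hRθ, hα.div hdenc fun r hr => (hden r hr).ne',
    hβ.div hdenc fun r hr => (hden r hr).ne', fun r hr => div_pos (hβpos r hr) (hden r hr),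
    fun r hr θ => ?_⟩
  have := (hden r hr).ne'
  field_simp
  linear_combination (-α r) * hyp1 r hr θ - β r * hyp2 r hr θ

theorem pos_of_mul_sub_mul_ne_zero (hS : TransportSystem R Rr Rθ v φ ψ)
    (hcons : ∀ r > 0, ∀ θ, Rθ r θ ^ 2 + v r θ ^ 2 = h r) {P : ℝ → ℝ → ℝ}
    (hf : ∀ r > 0, ∀ θ, Rr r θ * v r θ - Rθ r θ * P r θ ≠ 0) {r : ℝ} (hr : 0 < r) :
    0 < h r := by
  have hc := hcons r hr 0
  refine (hc ▸ by positivity : 0 ≤ h r).lt_of_ne fun h0 => hf r hr 0 ?_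
  have hθ : Rθ r 0 = 0 := by nlinarith [sq_nonneg (Rθ r 0), sq_nonneg (v r 0)]
  have hv : v r 0 = 0 := by nlinarith [sq_nonneg (Rθ r 0), sq_nonneg (v r 0)]
  rw [hS.eq_add r hr 0, hθ, hv]
  ring

end TransportSystem

theorem stmt8_general
    (R Rr Rθ Θr Θθ : ℝ → ℝ → ℝ) (α β f h : ℝ → ℝ)
    (hRcont : ContinuousOn (Function.uncurry R) (Ici 0 ×ˢ univ))
    (hRC2 : ContDiffOn ℝ 2 (Function.uncurry R) (Ioi 0 ×ˢ univ))
    (hRr : ∀ r > (0:ℝ), ∀ θ : ℝ, HasDerivAt (fun s => R s θ) (Rr r θ) r)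
    (hRθ : ∀ r > (0:ℝ), ∀ θ : ℝ, HasDerivAt (fun t => R r t) (Rθ r θ) θ)
    -- `R` is nonnegative and surjective onto `ℝ≥0`, `R(0,·)` is constant,
    -- and `R`, `Θ` come from functions on `ℝ≥0 × 𝕋` (2π-periodicity):
    (hRnonneg : ∀ r ≥ (0:ℝ), ∀ θ : ℝ, 0 ≤ R r θ)
    (hsurj : ∀ y : ℝ, 0 ≤ y → ∃ r θ : ℝ, 0 ≤ r ∧ R r θ = y)
    (hconst : ∀ θ θ' : ℝ, R 0 θ = R 0 θ')
    (hRper : ∀ r θ : ℝ, R r (θ + 2 * Real.pi) = R r θ)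
    -- the hyperbolic system:
    (hαcont : ContinuousOn α (Ioi 0)) (hβcont : ContinuousOn β (Ioi 0))
    (hβpos : ∀ r > (0:ℝ), 0 < β r)
    (hyp1 : ∀ r > (0:ℝ), ∀ θ : ℝ,
      Rθ r θ = α r * Rr r θ - β r * R r θ * Θr r θ)
    (hyp2 : ∀ r > (0:ℝ), ∀ θ : ℝ,
      R r θ * Θθ r θ = α r * R r θ * Θr r θ + β r * Rr r θ)
    -- the constraint and nonvanishing of the associated `f`:
    (hconstraint : ∀ r > (0:ℝ), ∀ θ : ℝ,
      (Rθ r θ) ^ 2 + (R r θ * Θθ r θ) ^ 2 = h r)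
    (hff : ∀ r > (0:ℝ), ∀ θ : ℝ,
      f r = R r θ * Rr r θ * Θθ r θ - R r θ * Rθ r θ * Θr r θ)
    (hfne : ∀ r > (0:ℝ), f r ≠ 0) :
    ∃ 𝓡 : ℝ → ℝ, (∀ r ≥ (0:ℝ), 0 ≤ 𝓡 r) ∧
      (∀ r ≥ (0:ℝ), ∀ θ : ℝ, R r θ = 𝓡 r) ∧
      𝓡 0 = 0 ∧ ∀ r > (0:ℝ), 0 < deriv 𝓡 r := by
  have hS := TransportSystem.of_hyperbolic hRC2 hRr hRθ hαcont hβcont hβpos hyp1 hyp2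
  have hRnn : ∀ r > 0, ∀ θ, 0 ≤ R r θ := fun r hr => hRnonneg r hr.le
  have hh : ∀ r > 0, 0 < h r := fun r hr => hS.pos_of_mul_sub_mul_ne_zero hconstraint
    (P := fun r θ => R r θ * Θr r θ) (fun r hr θ => by
      convert hff r hr θ ▸ hfne r hr using 1
      ring) hr
  have hR0 := hS.eq_zero_at_zero hconstraint hh hRnn (hsurj 0 le_rfl) hconst
  have hlim : Tendsto (uncurry R) (𝓝[>] 0 ×ˢ ⊤) (𝓝 0) :=
    (tendsto_uncurry_of_periodic two_pi_pos hRcont hRper hR0).mono_left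
      (prod_mono (nhdsWithin_mono _ Ioi_subset_Ici_self) le_rfl)
  have hrad : ∀ r > 0, ∀ θ θ', R r θ = R r θ' := fun r hr =>
    hS.eq_of_periodic hconstraint hh hRnn hlim two_pi_pos.ne' hRper hr
  refine ⟨fun r => R r 0, fun r hr => hRnonneg r hr 0, fun r hr θ => ?_, hR0 0, fun r hr => ?_⟩
  · rcases hr.eq_or_lt with rfl | hr
    · exact hconst θ 0
    · exact hrad r hr θ 0
  · have hθ : Rθ r 0 = 0 := IsLocalMin.hasDerivAt_eq_zero
      (Eventually.of_forall fun t => (hrad r hr 0 t).le) (hRθ r hr 0)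
    rw [(hRr r hr 0).deriv, hS.eq_add r hr 0, hθ, mul_zero, zero_add]
    exact mul_pos (hS.ψ_pos r hr) (hS.v_pos_of_snd_eq_zero hconstraint hh hRnn hlim hr hθ)

/-- Proposition 2.3: radial symmetry of `R` for solutions of
the constrained hyperbolic system. -/
theorem stmt8
    (R Θ Rr Rθ Θr Θθ : ℝ → ℝ → ℝ) (α β f h : ℝ → ℝ)
    (hRcont : ContinuousOn (Function.uncurry R) (Ici 0 ×ˢ univ))
    (hΘcont : ContinuousOn (Function.uncurry Θ) (Ici 0 ×ˢ univ))
    (hRC2 : ContDiffOn ℝ 2 (Function.uncurry R) (Ioi 0 ×ˢ univ))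
    (hΘC2 : ContDiffOn ℝ 2 (Function.uncurry Θ) (Ioi 0 ×ˢ univ))
    (hRr : ∀ r > (0:ℝ), ∀ θ : ℝ, HasDerivAt (fun s => R s θ) (Rr r θ) r)
    (hRθ : ∀ r > (0:ℝ), ∀ θ : ℝ, HasDerivAt (fun t => R r t) (Rθ r θ) θ)
    (hΘr : ∀ r > (0:ℝ), ∀ θ : ℝ, HasDerivAt (fun s => Θ s θ) (Θr r θ) r)
    (hΘθ : ∀ r > (0:ℝ), ∀ θ : ℝ, HasDerivAt (fun t => Θ r t) (Θθ r θ) θ)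
    -- `R` is nonnegative and surjective onto `ℝ≥0`, `R(0,·)` is constant,
    -- and `R`, `Θ` come from functions on `ℝ≥0 × 𝕋` (2π-periodicity):
    (hRnonneg : ∀ r ≥ (0:ℝ), ∀ θ : ℝ, 0 ≤ R r θ)
    (hsurj : ∀ y : ℝ, 0 ≤ y → ∃ r θ : ℝ, 0 ≤ r ∧ R r θ = y)
    (hconst : ∀ θ θ' : ℝ, R 0 θ = R 0 θ')
    (hRper : ∀ r θ : ℝ, R r (θ + 2 * Real.pi) = R r θ)
    (hΘper : ∀ r θ : ℝ, ∃ k : ℤ, Θ r (θ + 2 * Real.pi) = Θ r θ + 2 * Real.pi * k)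
    -- the hyperbolic system:
    (hαcont : ContinuousOn α (Ioi 0)) (hβcont : ContinuousOn β (Ioi 0))
    (hβpos : ∀ r > (0:ℝ), 0 < β r)
    (hyp1 : ∀ r > (0:ℝ), ∀ θ : ℝ,
      Rθ r θ = α r * Rr r θ - β r * R r θ * Θr r θ)
    (hyp2 : ∀ r > (0:ℝ), ∀ θ : ℝ,
      R r θ * Θθ r θ = α r * R r θ * Θr r θ + β r * Rr r θ)
    -- the constraint and nonvanishing of the associated `f`:
    (hconstraint : ∀ r > (0:ℝ), ∀ θ : ℝ,
      (Rθ r θ) ^ 2 + (R r θ * Θθ r θ) ^ 2 = h r)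
    (hff : ∀ r > (0:ℝ), ∀ θ : ℝ,
      f r = R r θ * Rr r θ * Θθ r θ - R r θ * Rθ r θ * Θr r θ)
    (hfne : ∀ r > (0:ℝ), f r ≠ 0) :
    ∃ 𝓡 : ℝ → ℝ, (∀ r ≥ (0:ℝ), 0 ≤ 𝓡 r) ∧
      (∀ r ≥ (0:ℝ), ∀ θ : ℝ, R r θ = 𝓡 r) ∧
      𝓡 0 = 0 ∧ ∀ r > (0:ℝ), 0 < deriv 𝓡 r :=
  stmt8_general R Rr Rθ Θr Θθ α β f h hRcont hRC2 hRr hRθ hRnonneg hsurj hconst hRper hαcont hβcont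
    hβpos hyp1 hyp2 hconstraint hff hfne
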